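/- arXiv:1804.08919 — 4 statements merged into one kernel-verified Lean document; each statement's English description precedes it below -/
import Mathlib

section
/- Let R be a commutative ring containing the rationals in which the only idempotents are 0 and 1, and let (f_n)_{n≥0} be a weak convolution family in R[[x]], i.e., ∑_{k=0}^n f_k(x) f_{n-k}(x) = f_n(2x) in R[[x]] for all n ≥ 0. Then either f_n = 0 for all n, or else there exists a unique formal power series Ψ ∈ R[[t]] such that f_n(x) = [t^n] e^{xΨ(t)} for all n ≥ 0. -/
noncomputable section

open PowerSeries

/-- The embedding of `R[[t]]` into the two-variable power series ring `R[[x,t]]`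
(where `x` is variable `0` and `t` is variable `1`), sending `t ↦ t`. -/
def tEmb {R : Type*} [CommRing R] (Ψ : PowerSeries R) : MvPowerSeries (Fin 2) R :=
  fun e => if e 0 = 0 then PowerSeries.coeff (R := R) (e 1) Ψ else 0

/-- Substitution of a multivariate power series `a` (intended to have zero constant
term) for the variable of a univariate power series `f`:  `f(a) = ∑ₙ fₙ aⁿ`.
When the constant term of `a` is zero, the coefficient of a monomial `e` in `aⁿ`
vanishes whenever `n` exceeds the total degree of `e`, so the finite sum below
computes the genuine substitution `∑ₙ fₙ aⁿ`. -/
def psubst {R : Type*} [CommRing R] {σ : Type*} (a : MvPowerSeries σ R)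
    (f : PowerSeries R) : MvPowerSeries σ R :=
  fun e => ∑ n ∈ Finset.range ((e.sum fun _ m => m) + 1),
    PowerSeries.coeff (R := R) n f * MvPowerSeries.coeff (R := R) e (a ^ n)

/-- The formal power series `e^{xΨ(t)} ∈ R[[x,t]]`, where `x` is variable `0`
and `t` is variable `1`.  It is well defined since `x·Ψ(t)` has zero constant term. -/
def expXPsi {R : Type*} [CommRing R] [Algebra ℚ R] (Ψ : PowerSeries R) :
    MvPowerSeries (Fin 2) R :=
  psubst (MvPowerSeries.X 0 * tEmb Ψ) (PowerSeries.exp R)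

/-- `f_n(x) = [tⁿ] e^{xΨ(t)} ∈ R[[x]]`: the coefficient of `tⁿ` in `e^{xΨ(t)}`,
as a power series in `x`. -/
def convFam {R : Type*} [CommRing R] [Algebra ℚ R] (Ψ : PowerSeries R) (n : ℕ) :
    PowerSeries R :=
  PowerSeries.mk fun m =>
    MvPowerSeries.coeff (R := R) (Finsupp.single 0 m + Finsupp.single 1 n) (expXPsi Ψ)

/-! Write `a n m` for the coefficient of `xᵐ` in `f n`. Coefficientwise the weak convolution
identity says `∑ a k i * a l j = 2 ^ m * a n m`, summed over `k + l = n`, `i + j = m`. At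
`(n, m) = (0, 0)` it makes `c = a 0 0` idempotent, so `c = 0` or `c = 1`. At any other `(n, m)`
the only terms containing `a n m` are the two products with `c`; all the others involve
coefficients of smaller total degree. Hence `(2 ^ m - 2 * c) * a n m` is determined by lower
coefficients: for `c = 0` this forces `f = 0`, and for `c = 1` everything is determined except
the coefficients `a n 1`, which we collect into `Ψ`. The family `[tⁿ] e^{xΨ(t)}` has
`a n 1 = [tⁿ] Ψ` and satisfies the identity because its coefficients are `[tⁿ] Ψᵐ / m!` and
`exp x * exp x = exp 2x`.
-/
section

open Finset

variable {R : Type*} [CommRing R]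

theorem coeff_psubst {σ : Type*} (a : MvPowerSeries σ R) (f : R⟦X⟧) (e : σ →₀ ℕ) :
    MvPowerSeries.coeff e (psubst a f) = ∑ n ∈ range ((e.sum fun _ m => m) + 1),
      coeff n f * MvPowerSeries.coeff e (a ^ n) := rfl

theorem coeff_tEmb (Ψ : R⟦X⟧) (e : Fin 2 →₀ ℕ) :
    MvPowerSeries.coeff e (tEmb Ψ) = if e 0 = 0 then coeff (e 1) Ψ else 0 := rfl

theorem tEmb_eq_rename (Ψ : R⟦X⟧) :
    tEmb Ψ = MvPowerSeries.rename (Function.Embedding.punit (1 : Fin 2)) Ψ := by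
  ext e
  rw [coeff_tEmb]
  split_ifs with he
  · have : e = Finsupp.embDomain (Function.Embedding.punit 1) (Finsupp.single () (e 1)) := by
      ext i; fin_cases i <;> simp [he, Function.Embedding.punit, Finsupp.embDomain_single]
    conv_rhs => rw [this, MvPowerSeries.coeff_embDomain_rename]
    rfl
  · refine (MvPowerSeries.coeff_rename_eq_zero _ _ ?_).symm
    rintro ⟨x, rfl⟩
    exact he (Finsupp.mapDomain_of_notMem_range _ _ (by simp [Function.Embedding.punit]))

theorem coeff_X_zero_mul_tEmb_pow (Ψ : R⟦X⟧) (j m n : ℕ) :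
    MvPowerSeries.coeff (Finsupp.single 0 m + Finsupp.single 1 n)
      ((MvPowerSeries.X 0 * tEmb Ψ) ^ j) = if j = m then coeff n (Ψ ^ m) else 0 := by
  rw [mul_pow, MvPowerSeries.X_pow_eq, tEmb_eq_rename, ← map_pow,
    MvPowerSeries.coeff_monomial_mul]
  have hle :
      Finsupp.single 0 j ≤ Finsupp.single 0 m + Finsupp.single (1 : Fin 2) n ↔ j ≤ m := by
    rw [Finsupp.single_le_iff]; simp
  have hsub : Finsupp.single 0 m + Finsupp.single (1 : Fin 2) n - Finsupp.single 0 j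
      = Finsupp.single 0 (m - j) + Finsupp.single 1 n := by
    ext i; fin_cases i <;> simp
  rcases lt_trichotomy j m with hj | rfl | hj
  · rw [if_pos (hle.2 hj.le), if_neg hj.ne, hsub, MvPowerSeries.coeff_rename_eq_zero _ _ ?_,
      mul_zero]
    rintro ⟨x, hx⟩
    have h0 : x.mapDomain (Function.Embedding.punit (1 : Fin 2)) 0 = 0 :=
      Finsupp.mapDomain_of_notMem_range _ _ (by simp [Function.Embedding.punit])
    rw [hx, Finsupp.add_apply, Finsupp.single_eq_same, Finsupp.single_eq_of_ne (by decide),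
      add_zero] at h0
    omega
  · have : Finsupp.single 0 0 + Finsupp.single (1 : Fin 2) n
        = Finsupp.embDomain (Function.Embedding.punit 1) (Finsupp.single () n) := by
      simp [Finsupp.embDomain_single, Function.Embedding.punit]
    rw [if_pos (hle.2 le_rfl), if_pos rfl, hsub, Nat.sub_self, this,
      MvPowerSeries.coeff_embDomain_rename, one_mul]
    rfl
  · rw [if_neg (by rw [hle]; omega), if_neg hj.ne']

def IsWeakConvolutionFamily (f : ℕ → R⟦X⟧) : Prop :=
  ∀ n, ∑ q ∈ antidiagonal n, f q.1 * f q.2 = rescale 2 (f n)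

theorem isWeakConvolutionFamily_iff_coeff {f : ℕ → R⟦X⟧} :
    IsWeakConvolutionFamily f ↔ ∀ n m, ∑ q ∈ antidiagonal n, ∑ p ∈ antidiagonal m,
      coeff p.1 (f q.1) * coeff p.2 (f q.2) = 2 ^ m * coeff m (f n) := by
  simp only [IsWeakConvolutionFamily, PowerSeries.ext_iff, map_sum, coeff_mul, coeff_rescale]

theorem isWeakConvolutionFamily_zero : IsWeakConvolutionFamily (0 : ℕ → R⟦X⟧) := by
  simp [IsWeakConvolutionFamily]

namespace IsWeakConvolutionFamily

variable {f g : ℕ → R⟦X⟧}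

theorem coeff_zero_mul_self (hf : IsWeakConvolutionFamily f) :
    coeff 0 (f 0) * coeff 0 (f 0) = coeff 0 (f 0) := by
  simpa using isWeakConvolutionFamily_iff_coeff.1 hf 0 0

theorem two_pow_sub_mul_coeff_sub_eq_zero (hf : IsWeakConvolutionFamily f)
    (hg : IsWeakConvolutionFamily g) (h0 : coeff 0 (f 0) = coeff 0 (g 0)) {n m : ℕ}
    (hnm : n + m ≠ 0) (hlt : ∀ k i, k + i < n + m → coeff i (f k) = coeff i (g k)) :
    (2 ^ m - 2 * coeff 0 (f 0)) * (coeff m (f n) - coeff m (g n)) = 0 := by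
  have hsum : ∑ x ∈ antidiagonal n ×ˢ antidiagonal m,
      (coeff x.2.1 (f x.1.1) * coeff x.2.2 (f x.1.2) -
        coeff x.2.1 (g x.1.1) * coeff x.2.2 (g x.1.2)) =
      2 ^ m * (coeff m (f n) - coeff m (g n)) := by
    rw [sum_product, mul_sub, ← isWeakConvolutionFamily_iff_coeff.1 hf n m,
      ← isWeakConvolutionFamily_iff_coeff.1 hg n m, ← sum_sub_distrib]
    simp only [sum_sub_distrib]
  -- every other term has `k + i < n + m` and `l + j < n + m`, so it vanishes by `hlt`
  rw [sum_eq_add_of_mem ((0, n), (0, m)) ((n, 0), (m, 0)) (by simp) (by simp)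
    (by simp; omega) ?_] at hsum
  · rw [← h0] at hsum
    linear_combination -hsum
  · rintro ⟨⟨k, l⟩, i, j⟩ hx ⟨hne₁, hne₂⟩
    simp only [mem_product, HasAntidiagonal.mem_antidiagonal, ne_eq, Prod.mk.injEq]
      at hx hne₁ hne₂
    rw [hlt k i (by omega), hlt l j (by omega), sub_self]

end IsWeakConvolutionFamily

variable [Algebra ℚ R]

theorem coeff_convFam (Ψ : R⟦X⟧) (n m : ℕ) :
    coeff m (convFam Ψ n) = coeff m (exp R) * coeff n (Ψ ^ m) := by
  rw [convFam, coeff_mk, expXPsi, coeff_psubst, sum_eq_single_of_mem m]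
  · rw [coeff_X_zero_mul_tEmb_pow, if_pos rfl]
  · rw [mem_range, Nat.lt_succ_iff, Finsupp.sum_add_index' (fun _ => rfl) (fun _ _ _ => rfl)]
    simp
  · intro j _ hj
    rw [coeff_X_zero_mul_tEmb_pow, if_neg hj, mul_zero]

theorem isWeakConvolutionFamily_convFam (Ψ : R⟦X⟧) : IsWeakConvolutionFamily (convFam Ψ) := by
  refine isWeakConvolutionFamily_iff_coeff.2 fun n m => ?_
  have hexp : ∑ p ∈ antidiagonal m, coeff p.1 (exp R) * coeff p.2 (exp R) =
      2 ^ m * coeff m (exp R) := by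
    simpa [coeff_mul, coeff_rescale, one_add_one_eq_two] using
      congr(coeff m $(exp_mul_exp_eq_exp_add (1 : R) 1))
  calc ∑ q ∈ antidiagonal n, ∑ p ∈ antidiagonal m,
        coeff p.1 (convFam Ψ q.1) * coeff p.2 (convFam Ψ q.2)
      = ∑ p ∈ antidiagonal m, coeff p.1 (exp R) * coeff p.2 (exp R) *
          ∑ q ∈ antidiagonal n, coeff q.1 (Ψ ^ p.1) * coeff q.2 (Ψ ^ p.2) := by
        rw [sum_comm]
        simp only [coeff_convFam, mul_sum]
        refine sum_congr rfl fun _ _ => sum_congr rfl fun _ _ => by ring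
    _ = ∑ p ∈ antidiagonal m, coeff p.1 (exp R) * coeff p.2 (exp R) * coeff n (Ψ ^ m) := by
        refine sum_congr rfl fun p hp => ?_
        rw [← coeff_mul, ← pow_add, HasAntidiagonal.mem_antidiagonal.1 hp]
    _ = 2 ^ m * coeff m (convFam Ψ n) := by
        rw [← sum_mul, hexp, coeff_convFam, mul_assoc]

theorem coeff_zero_convFam_zero (Ψ : R⟦X⟧) : coeff 0 (convFam Ψ 0) = 1 := by
  simp [coeff_convFam]

theorem coeff_one_convFam (Ψ : R⟦X⟧) (n : ℕ) : coeff 1 (convFam Ψ n) = coeff n Ψ := by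
  simp [coeff_convFam]

theorem isUnit_two_pow_sub_two {m : ℕ} (hm : m ≠ 1) : IsUnit ((2 : R) ^ m - 2) := by
  have : (2 : ℚ) ^ m - 2 ≠ 0 := by
    rw [sub_ne_zero]
    exact fun h => hm (pow_right_injective₀ two_pos (by norm_num) (h.trans (pow_one 2).symm))
  have := (IsUnit.mk0 _ this).map (algebraMap ℚ R)
  rwa [map_sub, map_pow, map_ofNat] at this

theorem isUnit_two_pow (m : ℕ) : IsUnit ((2 : R) ^ m) := by
  have := (IsUnit.mk0 (2 : ℚ) two_ne_zero).map (algebraMap ℚ R)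
  rw [map_ofNat] at this
  exact this.pow m

namespace IsWeakConvolutionFamily

variable {f g : ℕ → R⟦X⟧}

theorem eq_of_coeff_zero_zero_eq (hf : IsWeakConvolutionFamily f)
    (hg : IsWeakConvolutionFamily g)
    (h0 : coeff 0 (f 0) = coeff 0 (g 0))
    (h1 : coeff 0 (f 0) = 0 ∨ coeff 0 (f 0) = 1 ∧ ∀ n, coeff 1 (f n) = coeff 1 (g n)) :
    f = g := by
  suffices ∀ n m, coeff m (f n) = coeff m (g n) from funext fun n => ext (this n)
  intro n m
  induction hN : n + m using Nat.strong_induction_on generalizing n m with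
  | _ N ih =>
  subst hN
  rcases eq_or_ne (n + m) 0 with hnm | hnm
  · obtain ⟨rfl, rfl⟩ : n = 0 ∧ m = 0 := by omega
    exact h0
  have key := two_pow_sub_mul_coeff_sub_eq_zero hf hg h0 hnm fun k i hki => ih _ hki k i rfl
  rw [← sub_eq_zero]
  rcases h1 with hc | ⟨hc, hlin⟩
  · rw [hc, mul_zero, sub_zero] at key
    exact (isUnit_two_pow m).mul_right_eq_zero.1 key
  · rcases eq_or_ne m 1 with rfl | hm
    · exact sub_eq_zero.2 (hlin n)
    · rw [hc, mul_one] at key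
      exact (isUnit_two_pow_sub_two hm).mul_right_eq_zero.1 key

end IsWeakConvolutionFamily

end

/-- Let `R` be a commutative ring containing the rationals in
which the only idempotents are `0` and `1`, and let `(f_n)` be a weak convolution
family in `R[[x]]`, i.e. `∑_{k=0}^n f_k(x) f_{n-k}(x) = f_n(2x)` for all `n`
(where `f_n(2x)` is the substitution `x ↦ 2x`, i.e. `rescale 2`).  Then either
`f_n = 0` for all `n`, or there exists a unique `Ψ ∈ R[[t]]` such that
`f_n(x) = [tⁿ] e^{xΨ(t)}` for all `n`. -/
theorem weak_convolution_family_classification {R : Type*} [CommRing R] [Algebra ℚ R]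
    (hidem : ∀ e : R, e * e = e → e = 0 ∨ e = 1)
    (f : ℕ → PowerSeries R)
    (hweak : ∀ n, ∑ k ∈ Finset.range (n + 1), f k * f (n - k) =
      PowerSeries.rescale (2 : R) (f n)) :
    (∀ n, f n = 0) ∨ ∃! Ψ : PowerSeries R, ∀ n, f n = convFam Ψ n := by
  have hf : IsWeakConvolutionFamily f := fun n => by
    rw [Finset.Nat.sum_antidiagonal_eq_sum_range_succ_mk, hweak]
  rcases hidem _ hf.coeff_zero_mul_self with h0 | h1
  · left
    exact congrFun
      (hf.eq_of_coeff_zero_zero_eq isWeakConvolutionFamily_zero (by simp [h0]) (.inl h0))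
  · right
    refine ⟨mk fun n => coeff 1 (f n), fun n => congrFun (hf.eq_of_coeff_zero_zero_eq
      (isWeakConvolutionFamily_convFam _) ?_ (.inr ⟨h1, fun n => ?_⟩)) n, fun Ψ hΨ => ?_⟩
    · rw [h1, coeff_zero_convFam_zero]
    · rw [coeff_one_convFam, coeff_mk]
    · ext n
      rw [coeff_mk, hΨ, coeff_one_convFam]
end
end

section
/- Let R be a commutative ring and let A = (a_{ij}), B = (b_{ij}), C = (c_{ij}) be infinite matrices with entries in R satisfying ∑_{j=0}^n a_{ij} b_{ℓ,n-j} = c_{i+ℓ,n} for all i, ℓ, n ≥ 0. Suppose that a_{00} and b_{00} are invertible in R. Then there exist unique formal power series f, g, h ∈ R[[u]] such that the row-generating series satisfy A_i(u) = f(u) h(u)^i, B_i(u) = g(u) h(u)^i, and C_i(u) = f(u) g(u) h(u)^i for all i ≥ 0; moreover f and g are invertible in R[[u]]. -/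
noncomputable section

open PowerSeries

/-- The `i`-th row-generating series `Mᵢ(u) = ∑_j m_{ij} uʲ ∈ R[[u]]` of an
infinite matrix `M = (m_{ij})_{i,j ≥ 0}` with entries in `R`. -/
def rowGen {R : Type*} [CommRing R] (m : ℕ → ℕ → R) (i : ℕ) : PowerSeries R :=
  PowerSeries.mk (m i)

/-!
The convolution identity says exactly that `Aᵢ(u) Bₗ(u) = C_{i+ℓ}(u)`. Hence
`A_{i+1} B₀ = C_{i+1} = Aᵢ B₁`, so with `h = B₁ B₀⁻¹` each row of `A` is `h` times the previous
one; then `Cᵢ = Aᵢ B₀` and `A₀ Bᵢ = Cᵢ` give the other two rows. Any other triple must have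
`f = A₀`, `g = B₀`, and `h` is then forced by `A₁ = f h` since `f` is a unit.
-/

section MulEqApplyAdd

variable {M : Type*} [CommMonoidWithZero M] {A B C : ℕ → M}

theorem left_eq_mul_pow_of_mul_eq_apply_add (hmul : ∀ i l, A i * B l = C (i + l))
    (hB : IsUnit (B 0)) (i : ℕ) : A i = A 0 * (B 1 * Ring.inverse (B 0)) ^ i := by
  induction i with
  | zero => simp
  | succ i ih =>
    calc A (i + 1) = A (i + 1) * B 0 * Ring.inverse (B 0) := by
          rw [mul_assoc, Ring.mul_inverse_cancel _ hB, mul_one]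
      _ = A i * B 1 * Ring.inverse (B 0) := by rw [hmul, hmul]
      _ = A 0 * (B 1 * Ring.inverse (B 0)) ^ (i + 1) := by
          rw [ih, pow_succ]; simp only [mul_assoc]

theorem apply_eq_mul_mul_pow_of_mul_eq_apply_add (hmul : ∀ i l, A i * B l = C (i + l))
    (hB : IsUnit (B 0)) (i : ℕ) : C i = A 0 * B 0 * (B 1 * Ring.inverse (B 0)) ^ i := by
  calc C i = A i * B 0 := (hmul i 0).symm
    _ = A 0 * B 0 * (B 1 * Ring.inverse (B 0)) ^ i := by
      rw [left_eq_mul_pow_of_mul_eq_apply_add hmul hB i, mul_right_comm]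

theorem right_eq_mul_pow_of_mul_eq_apply_add (hmul : ∀ i l, A i * B l = C (i + l))
    (hA : IsUnit (A 0)) (hB : IsUnit (B 0)) (i : ℕ) :
    B i = B 0 * (B 1 * Ring.inverse (B 0)) ^ i := by
  refine hA.mul_left_cancel ?_
  rw [hmul, zero_add, apply_eq_mul_mul_pow_of_mul_eq_apply_add hmul hB, mul_assoc]

end MulEqApplyAdd

theorem eq_and_eq_of_mul_pow_eq_mul_pow {M : Type*} [CommMonoid M] {f h f' h' : M}
    (hf : IsUnit f) (heq : ∀ i : ℕ, f * h ^ i = f' * h' ^ i) : f' = f ∧ h' = h := by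
  have hf' : f' = f := by simpa using (heq 0).symm
  refine ⟨hf', hf.mul_left_cancel ?_⟩
  simpa [hf'] using (heq 1).symm

theorem rowGen_mul_rowGen {R : Type*} [CommRing R] {a b c : ℕ → ℕ → R}
    (hconv : ∀ i l n, ∑ j ∈ Finset.range (n + 1), a i j * b l (n - j) = c (i + l) n)
    (i l : ℕ) : rowGen a i * rowGen b l = rowGen c (i + l) := by
  ext n
  rw [coeff_mul, Finset.Nat.sum_antidiagonal_eq_sum_range_succ_mk]
  simpa [rowGen] using hconv i l n

theorem isUnit_rowGen_iff {R : Type*} [CommRing R] {m : ℕ → ℕ → R} {i : ℕ} :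
    IsUnit (rowGen m i) ↔ IsUnit (m i 0) := by
  simp [rowGen, isUnit_iff_constantCoeff]

/-- Let `R` be a commutative ring and `A = (a_{ij})`,
`B = (b_{ij})`, `C = (c_{ij})` infinite matrices over `R` satisfying
`∑_{j=0}^n a_{ij} b_{ℓ,n-j} = c_{i+ℓ,n}` for all `i, ℓ, n ≥ 0`, with `a₀₀` and
`b₀₀` invertible in `R`.  Then there exist unique `f, g, h ∈ R[[u]]` such that
`Aᵢ(u) = f(u)h(u)ⁱ`, `Bᵢ(u) = g(u)h(u)ⁱ` and `Cᵢ(u) = f(u)g(u)h(u)ⁱ` for all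
`i ≥ 0`; moreover `f` and `g` are invertible in `R[[u]]`. -/
theorem pascal_like_classification {R : Type*} [CommRing R] (a b c : ℕ → ℕ → R)
    (hconv : ∀ i l n, ∑ j ∈ Finset.range (n + 1), a i j * b l (n - j) = c (i + l) n)
    (ha00 : IsUnit (a 0 0)) (hb00 : IsUnit (b 0 0)) :
    ∃ f g h : PowerSeries R,
      (∀ i, rowGen a i = f * h ^ i) ∧
      (∀ i, rowGen b i = g * h ^ i) ∧
      (∀ i, rowGen c i = f * g * h ^ i) ∧
      IsUnit f ∧ IsUnit g ∧
      ∀ f' g' h' : PowerSeries R,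
        ((∀ i, rowGen a i = f' * h' ^ i) ∧
         (∀ i, rowGen b i = g' * h' ^ i) ∧
         (∀ i, rowGen c i = f' * g' * h' ^ i)) →
        f' = f ∧ g' = g ∧ h' = h := by
  have hmul := rowGen_mul_rowGen hconv
  have hf : IsUnit (rowGen a 0) := isUnit_rowGen_iff.mpr ha00
  have hg : IsUnit (rowGen b 0) := isUnit_rowGen_iff.mpr hb00
  have hA := left_eq_mul_pow_of_mul_eq_apply_add hmul hg
  refine ⟨_, _, _, hA, right_eq_mul_pow_of_mul_eq_apply_add hmul hf hg,
    apply_eq_mul_mul_pow_of_mul_eq_apply_add hmul hg, hf, hg, ?_⟩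
  rintro f' g' h' ⟨hA', hB', -⟩
  obtain ⟨rfl, rfl⟩ := eq_and_eq_of_mul_pow_eq_mul_pow hf fun i => (hA i).symm.trans (hA' i)
  exact ⟨rfl, by simpa using (hB' 0).symm, rfl⟩
end
end

section
/- Let R be a commutative ring and let L = (L_{ij})_{i,j≥0} be a lower-triangular infinite matrix with entries in R (L_{ij} = 0 for j > i) satisfying ∑_{j=0}^n L_{ij} L_{ℓ,n-j} = L_{i+ℓ,n} for all i, ℓ, n ≥ 0. If L_{00} is invertible in R, then in fact L_{00} = 1, and there exist κ, λ ∈ R such that L_{ij} = κ^{i−j} λ^j C(i,j) for all i ≥ j ≥ 0. -/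
noncomputable section

open PowerSeries

/-- **no-go theorem for lower-triangular Pascal-like matrices.**
Let `R` be a commutative ring and `L = (L_{ij})` a lower-triangular infinite
matrix over `R` (`L_{ij} = 0` for `j > i`) satisfying
`∑_{j=0}^n L_{ij} L_{ℓ,n-j} = L_{i+ℓ,n}` for all `i, ℓ, n ≥ 0`.  If `L₀₀` is
invertible in `R`, then in fact `L₀₀ = 1`, and there exist `κ, λ ∈ R` with
`L_{ij} = κ^{i-j} λ^j C(i,j)` for all `i ≥ j ≥ 0`. -/
theorem pascal_like_no_go {R : Type*} [CommRing R] (L : ℕ → ℕ → R)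
    (htri : ∀ i j, i < j → L i j = 0)
    (hconv : ∀ i l n, ∑ j ∈ Finset.range (n + 1), L i j * L l (n - j) = L (i + l) n)
    (hL00 : IsUnit (L 0 0)) :
    L 0 0 = 1 ∧
      ∃ κ lam : R, ∀ i j, j ≤ i →
        L i j = κ ^ (i - j) * lam ^ j * (i.choose j : R) := by
  have h00 : L 0 0 = 1 := by
    have h := hconv 0 0 0
    simp [Finset.sum_range_one] at h
    exact hL00.mul_left_cancel (by rw [h, mul_one])
  refine ⟨h00, L 1 0, L 1 1, ?_⟩
  have key : ∀ i j, L i j = (L 1 0) ^ (i - j) * (L 1 1) ^ j * (i.choose j : R) := by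
    intro i
    induction i with
    | zero =>
      intro j
      cases j with
      | zero => simp [h00]
      | succ j => simp [htri 0 (j + 1) (Nat.succ_pos j)]
    | succ i ih =>
      intro j
      have h := hconv i 1 j
      cases j with
      | zero =>
        simp only [zero_add, Finset.sum_range_one, Nat.sub_zero] at h
        rw [← h, ih 0]
        simp only [Nat.sub_zero, pow_zero, Nat.choose_zero_right, Nat.cast_one, mul_one, pow_succ]
      | succ j =>
        rw [Finset.sum_range_succ, Finset.sum_range_succ] at h
        have hz : ∑ k ∈ Finset.range j, L i k * L 1 (j + 1 - k) = 0 := by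
          apply Finset.sum_eq_zero
          intro k hk
          rw [htri 1 (j + 1 - k) (by simp at hk; omega), mul_zero]
        rw [hz, zero_add] at h
        have hjj : j + 1 - j = 1 := by omega
        rw [hjj, Nat.sub_self] at h
        rw [← h, ih j, ih (j + 1)]
        rcases Nat.lt_or_ge j i with hji | hji
        · have h1 : i - j = (i - (j + 1)) + 1 := by omega
          have h2 : i + 1 - (j + 1) = i - j := by omega
          rw [Nat.choose_succ_succ, h2, h1]
          push_cast
          ring
        · rcases Nat.eq_or_lt_of_le hji with heq | hlt
          · subst heq
            simp [Nat.choose_succ_self, Nat.sub_self, Nat.choose_self]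
            ring
          · rw [Nat.choose_eq_zero_of_lt hlt, Nat.choose_eq_zero_of_lt (by omega),
                Nat.choose_eq_zero_of_lt (by omega)]
            push_cast
            ring
  intro i j _
  exact key i j
end
end

section
/- For every rational number r with r ≠ 0 and r ≠ −1, and every natural number m with m ≠ 1, one has 1 + r^m ≠ (1+r)^m. -/
lemma key_pow_lt {x y : ℚ} (hx : 0 < x) (hy : 0 < y) (k : ℕ) :
    x ^ (k + 2) + y ^ (k + 2) < (x + y) ^ (k + 2) := by
  have hxy : x < x + y := by linarith
  have hyx : y < x + y := by linarith
  have hx' : x ^ (k + 1) < (x + y) ^ (k + 1) :=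
    pow_lt_pow_left₀ hxy hx.le (Nat.succ_ne_zero k)
  have hy' : y ^ (k + 1) < (x + y) ^ (k + 1) :=
    pow_lt_pow_left₀ hyx hy.le (Nat.succ_ne_zero k)
  calc x ^ (k + 2) + y ^ (k + 2) = x * x ^ (k + 1) + y * y ^ (k + 1) := by ring
    _ < x * (x + y) ^ (k + 1) + y * (x + y) ^ (k + 1) := by
        apply add_lt_add
        · exact mul_lt_mul_of_pos_left hx' hx
        · exact mul_lt_mul_of_pos_left hy' hy
    _ = (x + y) ^ (k + 2) := by ring

/-- For every rational number `r` with `r ≠ 0` and `r ≠ -1`,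
and every natural number `m` with `m ≠ 1`, one has `1 + rᵐ ≠ (1 + r)ᵐ`. -/
theorem one_add_pow_ne {r : ℚ} (hr0 : r ≠ 0) (hr1 : r ≠ -1) {m : ℕ} (hm : m ≠ 1) :
    1 + r ^ m ≠ (1 + r) ^ m := by
  rcases Nat.eq_zero_or_pos m with rfl | hm0
  · norm_num
  obtain ⟨k, rfl⟩ : ∃ k, m = k + 2 := ⟨m - 2, by omega⟩
  intro heq
  rcases lt_trichotomy r 0 with hneg | h0 | hpos
  · rcases lt_trichotomy r (-1) with hlt | heq1 | hgt
    · rcases Nat.even_or_odd (k + 2) with he | ho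
      · have h2 : (-r) ^ (k + 2) = r ^ (k + 2) := he.neg_pow r
        have h3 : (1 + r) ^ (k + 2) = ((-r) - 1) ^ (k + 2) := by
          rw [show (1 + r) = -((-r) - 1) by ring, he.neg_pow]
        have h4 : ((-r) - 1) ^ (k + 2) < (-r) ^ (k + 2) :=
          pow_lt_pow_left₀ (by linarith) (by linarith) (by omega)
        linarith
      · have h2 : (-r) ^ (k + 2) = -(r ^ (k + 2)) := ho.neg_pow r
        have h3 : (1 + r) ^ (k + 2) = -(((-r) - 1) ^ (k + 2)) := by
          rw [show (1 + r) = -((-r) - 1) by ring, ho.neg_pow]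
        have h5 := key_pow_lt (x := 1) (y := (-r) - 1) one_pos (by linarith) k
        rw [one_pow, show (1 : ℚ) + ((-r) - 1) = -r by ring] at h5
        linarith
    · exact hr1 heq1
    · rcases Nat.even_or_odd (k + 2) with he | ho
      · have h2 : (-r) ^ (k + 2) = r ^ (k + 2) := he.neg_pow r
        have h3 : (1 + r) ^ (k + 2) < 1 :=
          pow_lt_one₀ (by linarith) (by linarith) (by omega)
        have h4 : 0 < (-r) ^ (k + 2) := pow_pos (by linarith) _
        linarith
      · have h2 : (-r) ^ (k + 2) = -(r ^ (k + 2)) := ho.neg_pow r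
        have h5 := key_pow_lt (x := 1 + r) (y := -r) (by linarith) (by linarith) k
        rw [show (1 + r) + -r = 1 by ring, one_pow] at h5
        linarith
  · exact hr0 h0
  · have h5 := key_pow_lt (x := 1) (y := r) one_pos hpos k
    rw [one_pow] at h5
    linarith
end
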